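/- Let λ and μ be positive roots with λ ⪯ μ. Then λ_s ≤ μ_s for every s ∈ B, i.e., every coordinate of λ in the basis (α_s) is at most the corresponding coordinate of μ. -/

import Mathlib

open Real

variable {B : Type*}

/-- The pairing constant `⟨α_s, α_t⟩` of the standard bilinear form:
`-cos (π / M s t)` if `M s t ≠ 0`, and `-1` if `M s t = 0` (i.e. `m_{s,t} = ∞`). -/
noncomputable def pairing (M : CoxeterMatrix B) (s t : B) : ℝ :=
  if M s t = 0 then -1 else -Real.cos (Real.pi / (M s t : ℝ))

/-- The standard symmetric bilinear form on `V = B → ℝ`. -/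
noncomputable def form [Fintype B] (M : CoxeterMatrix B) (v w : B → ℝ) : ℝ :=
  ∑ s, ∑ t, v s * w t * pairing M s t

/-- The simple root `α_s`, i.e. the standard basis vector at `s`. -/
noncomputable def sroot [DecidableEq B] (s : B) : B → ℝ := Pi.single s 1

/-- `λ` is a root: `λ = ρ(w) α_s` for some `w ∈ W`, `s ∈ B`. -/
def IsRoot [DecidableEq B] (M : CoxeterMatrix B)
    (ρ : M.Group →* Module.End ℝ (B → ℝ)) (lam : B → ℝ) : Prop :=
  ∃ (w : M.Group) (s : B), ρ w (sroot s) = lam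

/-- `λ` is positive: all coordinates are nonnegative. -/
def IsPos (lam : B → ℝ) : Prop := ∀ s, 0 ≤ lam s

/-- `λ` is negative: all coordinates are nonpositive. -/
def IsNeg (lam : B → ℝ) : Prop := ∀ s, lam s ≤ 0

/-- `λ` is a positive root. -/
def IsPosRoot [DecidableEq B] (M : CoxeterMatrix B)
    (ρ : M.Group →* Module.End ℝ (B → ℝ)) (lam : B → ℝ) : Prop :=
  IsRoot M ρ lam ∧ IsPos lam

/-- `λ` dominates `μ`: for every `w ∈ W`, if `ρ(w) μ` is positive then so is `ρ(w) λ`. -/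
def Dominates (M : CoxeterMatrix B)
    (ρ : M.Group →* Module.End ℝ (B → ℝ)) (lam mu : B → ℝ) : Prop :=
  ∀ w : M.Group, IsPos (ρ w mu) → IsPos (ρ w lam)

/-- `λ` is a minimal root: a positive root dominating no positive root other than itself. -/
def IsMinimal [DecidableEq B] (M : CoxeterMatrix B)
    (ρ : M.Group →* Module.End ℝ (B → ℝ)) (lam : B → ℝ) : Prop :=
  IsPosRoot M ρ lam ∧
    ∀ mu, IsPosRoot M ρ mu → Dominates M ρ lam mu → mu = lam

/-- The depth `δ(λ)` of a positive root:
the least Coxeter length of a `w ∈ W` with `ρ(w⁻¹) λ` negative. -/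
noncomputable def depth (M : CoxeterMatrix B)
    (ρ : M.Group →* Module.End ℝ (B → ℝ)) (lam : B → ℝ) : ℕ :=
  sInf {n | ∃ w : M.Group, IsNeg (ρ w⁻¹ lam) ∧ M.toCoxeterSystem.length w = n}

/-- The partial order `λ ⪯ μ` on positive roots:
`μ = ρ(w) λ` for some `w` with `δ(μ) = ℓ(w) + δ(λ)`. -/
def PLE (M : CoxeterMatrix B)
    (ρ : M.Group →* Module.End ℝ (B → ℝ)) (lam mu : B → ℝ) : Prop :=
  ∃ w : M.Group, mu = ρ w lam ∧
    depth M ρ mu = M.toCoxeterSystem.length w + depth M ρ lam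

/-- The Coxeter graph of `M`: distinct `s`, `t` are adjacent iff `M s t ≥ 3` or `M s t = 0`. -/
def coxGraph (M : CoxeterMatrix B) : SimpleGraph B where
  Adj s t := s ≠ t ∧ (M s t = 0 ∨ 3 ≤ M s t)
  symm := by
    constructor
    intro s t h
    exact ⟨h.1.symm, by rw [M.symmetric t s]; exact h.2⟩
  loopless := by constructor; intro s h; exact h.1 rfl

/-- The support of a vector `λ ∈ V`. -/
def supp (lam : B → ℝ) : Set B := {s | lam s ≠ 0}

/-! The key fact is the positivity of roots: if `ℓ(u s) > ℓ(u)` then `ρ(u) α_s ≥ 0`. By induction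
on `ℓ(u)`: pick a right descent `t` of `u` and peel `t, s, t, …` off the right of `u` for as long as
the length drops, so that `u = v x` with `ℓ(u) = ℓ(v) + ℓ(x)`, `x` an alternating word in `s, t` of
length `k`, and `v` having neither `s` nor `t` as a right descent. In the dihedral group `⟨s, t⟩` the
coefficients of `ρ(x) α_s` are the Chebyshev values `U_k(c)`, `U_{k-1}(c)` at `c = -⟨α_s, α_t⟩`, equal
to `cos (π / m)` (or `1` when `m = ∞`); they are nonnegative because `ℓ(u s) > ℓ(u)` forces `k < m`.

Positivity gives `δ(s λ) ≤ δ(λ)` whenever `⟨λ, α_s⟩ > 0`. Along a reduced word for `w` with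
`δ(ρ(w) λ) = ℓ(w) + δ(λ)` each letter raises the depth by one, so at every step `⟨ν, α_s⟩ ≤ 0` and
`s ν = ν - 2 ⟨ν, α_s⟩ α_s ≥ ν` coordinatewise. -/

namespace CoxeterSystem

variable {W : Type*} [Group W] {M : CoxeterMatrix B} (cs : CoxeterSystem M W)

theorem exists_eq_mul_alternatingWord (w : W) {s : B} (t : B) (hs : ¬cs.IsRightDescent w s) :
    ∃ (v : W) (k : ℕ), w = v * cs.wordProd (alternatingWord s t k) ∧
      cs.length w = cs.length v + k ∧ ¬cs.IsRightDescent v s ∧ ¬cs.IsRightDescent v t := by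
  induction hn : cs.length w using Nat.strong_induction_on generalizing w s t with
  | _ n ih =>
  by_cases ht : cs.IsRightDescent w t
  · rw [isRightDescent_iff] at ht
    have hwt : ¬cs.IsRightDescent (w * cs.simple t) t := by
      rw [not_isRightDescent_iff, simple_mul_simple_cancel_right]
      omega
    obtain ⟨v, k, hw, hlen, hvt, hvs⟩ := ih _ (by omega) (w * cs.simple t) s hwt rfl
    refine ⟨v, k + 1, ?_, by omega, hvs, hvt⟩
    rw [alternatingWord_succ, wordProd_concat, ← mul_assoc, ← hw,
      simple_mul_simple_cancel_right]
  · exact ⟨w, 0, by simp [alternatingWord], by simp [hn], hs, ht⟩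

theorem lt_of_not_isRightDescent_mul_alternatingWord {v : W} {s t : B} {k : ℕ}
    (hlen : cs.length (v * cs.wordProd (alternatingWord s t k)) = cs.length v + k)
    (hs : ¬cs.IsRightDescent (v * cs.wordProd (alternatingWord s t k)) s) (hM : M s t ≠ 0) :
    k < M s t := by
  by_contra! hk
  have hred : ¬cs.IsReduced (alternatingWord t s (k + 1)) :=
    cs.not_isReduced_alternatingWord t s (by rwa [M.symmetric]) (by rw [M.symmetric]; omega)
  rw [not_isRightDescent_iff, mul_assoc, ← wordProd_concat, ← alternatingWord_succ] at hs
  have h₁ := cs.length_mul_le v (cs.wordProd (alternatingWord t s (k + 1)))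
  have h₂ := cs.length_wordProd_le (alternatingWord t s (k + 1))
  rw [length_alternatingWord] at h₂
  exact hred (by rw [IsReduced, length_alternatingWord]; omega)

end CoxeterSystem

lemma pairing_self (M : CoxeterMatrix B) (s : B) : pairing M s s = 1 := by
  simp [pairing]

lemma pairing_comm (M : CoxeterMatrix B) (s t : B) : pairing M s t = pairing M t s := by
  rw [pairing, pairing, M.symmetric]

open Polynomial Chebyshev in
lemma eval_U_neg_pairing_nonneg (M : CoxeterMatrix B) {s t : B} (hst : s ≠ t) {n : ℤ}
    (hn : -1 ≤ n) (hnM : M s t = 0 ∨ n + 1 ≤ M s t) : 0 ≤ (U ℝ n).eval (-pairing M s t) := by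
  by_cases hM : M s t = 0
  · simp only [pairing, hM, if_true, neg_neg, U_eval_one]
    exact_mod_cast (by omega : (0 : ℤ) ≤ n + 1)
  have hM2 : (2 : ℝ) ≤ M s t := by
    have := M.off_diagonal s t hst
    exact_mod_cast (by omega : 2 ≤ M s t)
  have hnM' : ((n + 1 : ℤ) : ℝ) ≤ M s t := by
    exact_mod_cast hnM.resolve_left hM
  set x := π / M s t with hx
  have hx_pos : 0 < x := by positivity
  have hsin : 0 < sin x := sin_pos_of_pos_of_lt_pi hx_pos (by
    rw [hx, div_lt_iff₀ (by linarith)]; nlinarith [pi_pos])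
  have hsin_mul : 0 ≤ sin ((n + 1) * x) := by
    apply sin_nonneg_of_nonneg_of_le_pi
    · exact mul_nonneg (by exact_mod_cast (by omega : (0 : ℤ) ≤ n + 1)) hx_pos.le
    · rw [hx, ← mul_div_assoc, div_le_iff₀ (by linarith)]
      push_cast at hnM'
      nlinarith [pi_pos]
  simp only [pairing, hM, if_false, neg_neg]
  exact nonneg_of_mul_nonneg_left (U_real_cos x n ▸ hsin_mul) hsin

section GeometricRepresentation

variable {M : CoxeterMatrix B} {ρ : M.Group →* Module.End ℝ (B → ℝ)}

lemma rho_mul_apply (w w' : M.Group) (v : B → ℝ) : ρ (w * w') v = ρ w (ρ w' v) := by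
  rw [map_mul, Module.End.mul_apply]

lemma rho_inv_apply_rho (w : M.Group) (v : B → ℝ) : ρ w⁻¹ (ρ w v) = v := by
  rw [← rho_mul_apply, inv_mul_cancel, map_one, Module.End.one_apply]

lemma rho_simple_rho_simple (s : B) (v : B → ℝ) : ρ (M.simple s) (ρ (M.simple s) v) = v := by
  rw [← rho_mul_apply, ← CoxeterMatrix.toCoxeterSystem_simple,
    CoxeterSystem.simple_mul_simple_self, map_one, Module.End.one_apply]

lemma depth_le_length {lam : B → ℝ} {w : M.Group} (h : IsNeg (ρ w⁻¹ lam)) :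
    depth M ρ lam ≤ M.toCoxeterSystem.length w :=
  Nat.sInf_le ⟨w, h, rfl⟩

variable [DecidableEq B]

lemma sroot_nonneg (s : B) : 0 ≤ sroot s := by
  simp [sroot, Pi.single_nonneg]

lemma IsRoot.rho {lam : B → ℝ} (h : IsRoot M ρ lam) (w : M.Group) : IsRoot M ρ (ρ w lam) := by
  obtain ⟨u, s, rfl⟩ := h
  exact ⟨w * u, s, rho_mul_apply w u _⟩

variable [Fintype B]

def IsGeometricRep (M : CoxeterMatrix B) (ρ : M.Group →* Module.End ℝ (B → ℝ)) : Prop :=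
  ∀ (s : B) (v : B → ℝ), ρ (M.simple s) v = v - (2 * form M v (sroot s)) • sroot s

lemma form_sroot (v : B → ℝ) (s : B) : form M v (sroot s) = ∑ t, v t * pairing M t s := by
  simp [form, sroot, Pi.single_apply]

lemma rho_simple_sroot_self (hρ : IsGeometricRep M ρ) (s : B) :
    ρ (M.simple s) (sroot s) = -sroot s := by
  rw [hρ, form_sroot]
  simp only [sroot, Pi.single_apply, ite_mul, one_mul, zero_mul, Finset.sum_ite_eq',
    Finset.mem_univ, if_true, pairing_self]
  module

lemma rho_simple_smul_add_smul (hρ : IsGeometricRep M ρ) (x y : B) (a b : ℝ) :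
    ρ (M.simple y) (a • sroot x + b • sroot y) =
      a • sroot x + (-b - 2 * a * pairing M x y) • sroot y := by
  rw [hρ, form_sroot]
  simp only [sroot, Pi.add_apply, Pi.smul_apply, Pi.single_apply, smul_eq_mul, mul_ite, mul_one,
    mul_zero, add_mul, ite_mul, zero_mul, Finset.sum_add_distrib, Finset.sum_ite_eq',
    Finset.mem_univ, if_true, pairing_self]
  module

open Polynomial Chebyshev in
lemma rho_wordProd_alternatingWord (hρ : IsGeometricRep M ρ) (s t : B) (k : ℕ) :
    ρ (M.toCoxeterSystem.wordProd (CoxeterSystem.alternatingWord s t k)) (sroot s) =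
      (U ℝ k).eval (-pairing M s t) • sroot (if Even k then s else t) +
        (U ℝ (k - 1)).eval (-pairing M s t) • sroot (if Even k then t else s) := by
  induction k with
  | zero => simp [CoxeterSystem.alternatingWord]
  | succ k ih =>
    have hU : (U ℝ (k + 1 : ℕ)).eval (-pairing M s t) =
        2 * -pairing M s t * (U ℝ k).eval (-pairing M s t) - (U ℝ (k - 1)).eval (-pairing M s t) := by
      simp only [Nat.cast_add_one, U_add_one, eval_sub, eval_mul, eval_ofNat, eval_X]
    rw [CoxeterSystem.alternatingWord_succ', CoxeterSystem.wordProd_cons, rho_mul_apply, ih,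
      CoxeterMatrix.toCoxeterSystem_simple, hU, Nat.cast_add_one, add_sub_cancel_right]
    by_cases hk : Even k
    · simp only [hk, if_true, if_false, rho_simple_smul_add_smul hρ, Nat.even_add_one, not_true]
      module
    · simp only [hk, if_true, if_false, rho_simple_smul_add_smul hρ, Nat.even_add_one,
        not_false_eq_true, pairing_comm M t s]
      module

theorem rho_sroot_nonneg_of_not_isRightDescent (hρ : IsGeometricRep M ρ) (u : M.Group) (s : B)
    (hs : ¬M.toCoxeterSystem.IsRightDescent u s) : 0 ≤ ρ u (sroot s) := by
  set cs := M.toCoxeterSystem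
  induction hn : cs.length u using Nat.strong_induction_on generalizing u s with
  | _ n ih =>
  by_cases hu : u = 1
  · simpa [hu] using sroot_nonneg s
  obtain ⟨t, ht⟩ := cs.exists_rightDescent_of_ne_one hu
  have hst : s ≠ t := by rintro rfl; exact hs ht
  obtain ⟨v, k, rfl, hlen, hvs, hvt⟩ := cs.exists_eq_mul_alternatingWord u t hs
  have hk : k ≠ 0 := by
    rintro rfl
    exact hvt (by simpa [CoxeterSystem.alternatingWord] using ht)
  have hv : ∀ x, x = s ∨ x = t → 0 ≤ ρ v (sroot x) := by
    rintro x (rfl | rfl)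
    · exact ih _ (by omega) v x hvs rfl
    · exact ih _ (by omega) v x hvt rfl
  have hkM : M s t = 0 ∨ (k : ℤ) + 1 ≤ M s t := by
    refine or_iff_not_imp_left.2 fun hM => ?_
    have := cs.lt_of_not_isRightDescent_mul_alternatingWord hlen hs hM
    omega
  rw [rho_mul_apply, rho_wordProd_alternatingWord hρ, map_add, map_smul, map_smul]
  refine add_nonneg (smul_nonneg ?_ ?_) (smul_nonneg ?_ ?_)
  · exact eval_U_neg_pairing_nonneg M hst (by omega) hkM
  · exact hv _ (by split_ifs <;> simp)
  · exact eval_U_neg_pairing_nonneg M hst (by omega) (by omega)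
  · exact hv _ (by split_ifs <;> simp)

lemma exists_length_eq_depth (hρ : IsGeometricRep M ρ) {lam : B → ℝ} (h : IsRoot M ρ lam) :
    ∃ w : M.Group, IsNeg (ρ w⁻¹ lam) ∧ M.toCoxeterSystem.length w = depth M ρ lam := by
  obtain ⟨u, s, rfl⟩ := h
  have hneg : IsNeg (ρ (u * M.simple s)⁻¹ (ρ u (sroot s))) := by
    rw [mul_inv_rev, rho_mul_apply, rho_inv_apply_rho, ← CoxeterMatrix.toCoxeterSystem_simple,
      CoxeterSystem.inv_simple, CoxeterMatrix.toCoxeterSystem_simple, rho_simple_sroot_self hρ]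
    exact neg_nonpos.2 (sroot_nonneg s)
  exact Nat.sInf_mem (s := {n | ∃ w : M.Group, IsNeg (ρ w⁻¹ _) ∧ M.toCoxeterSystem.length w = n})
    ⟨_, _, hneg, rfl⟩

lemma depth_rho_le (hρ : IsGeometricRep M ρ) {lam : B → ℝ} (h : IsRoot M ρ lam) (w : M.Group) :
    depth M ρ (ρ w lam) ≤ M.toCoxeterSystem.length w + depth M ρ lam := by
  obtain ⟨u, hu, hlen⟩ := exists_length_eq_depth hρ h
  calc depth M ρ (ρ w lam) ≤ M.toCoxeterSystem.length (w * u) :=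
        depth_le_length (by rwa [mul_inv_rev, rho_mul_apply, rho_inv_apply_rho])
    _ ≤ _ := hlen ▸ M.toCoxeterSystem.length_mul_le w u

lemma depth_rho_simple_le_of_form_pos (hρ : IsGeometricRep M ρ) {lam : B → ℝ}
    (h : IsRoot M ρ lam) {s : B} (hpos : 0 < form M lam (sroot s)) :
    depth M ρ (ρ (M.simple s) lam) ≤ depth M ρ lam := by
  obtain ⟨w, hw, hlen⟩ := exists_length_eq_depth hρ h
  rw [← hlen]
  by_cases hs : M.toCoxeterSystem.IsLeftDescent w s
  · refine (depth_le_length ?_).trans hs.le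
    rwa [mul_inv_rev, CoxeterSystem.inv_simple, rho_mul_apply,
      CoxeterMatrix.toCoxeterSystem_simple, rho_simple_rho_simple]
  · refine depth_le_length ?_
    have hαs : 0 ≤ ρ w⁻¹ (sroot s) := rho_sroot_nonneg_of_not_isRightDescent hρ w⁻¹ s
      (by rwa [CoxeterSystem.isRightDescent_inv_iff])
    show ρ w⁻¹ (ρ (M.simple s) lam) ≤ 0
    rw [hρ, map_sub, map_smul]
    exact sub_nonpos_of_le (le_trans hw (smul_nonneg (by positivity) hαs))

lemma le_rho_simple_of_depth_lt (hρ : IsGeometricRep M ρ) {lam : B → ℝ} (h : IsRoot M ρ lam)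
    {s : B} (hlt : depth M ρ lam < depth M ρ (ρ (M.simple s) lam)) :
    lam ≤ ρ (M.simple s) lam := by
  have hform : form M lam (sroot s) ≤ 0 :=
    not_lt.1 fun hpos => (depth_rho_simple_le_of_form_pos hρ h hpos).not_gt hlt
  rw [hρ, le_sub_self_iff]
  exact smul_nonpos_of_nonpos_of_nonneg (by linarith) (sroot_nonneg s)

lemma le_rho_wordProd_of_depth_eq (hρ : IsGeometricRep M ρ) {lam : B → ℝ} (h : IsRoot M ρ lam)
    (ω : List B)
    (hd : depth M ρ (ρ (M.toCoxeterSystem.wordProd ω) lam) = ω.length + depth M ρ lam) :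
    lam ≤ ρ (M.toCoxeterSystem.wordProd ω) lam := by
  induction ω with
  | nil => simp
  | cons i ω ih =>
    rw [CoxeterSystem.wordProd_cons, CoxeterMatrix.toCoxeterSystem_simple, rho_mul_apply] at hd ⊢
    rw [List.length_cons] at hd
    have hν := depth_rho_le hρ h (M.toCoxeterSystem.wordProd ω)
    have hω := M.toCoxeterSystem.length_wordProd_le ω
    have hsν := depth_rho_le hρ (h.rho (M.toCoxeterSystem.wordProd ω)) (M.simple i)
    rw [show M.toCoxeterSystem.length (M.simple i) = 1 from M.toCoxeterSystem.length_simple i]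
      at hsν
    exact (ih (by omega)).trans (le_rho_simple_of_depth_lt hρ (h.rho _) (by omega))

end GeometricRepresentation

theorem statement7_general [DecidableEq B] [Fintype B] (M : CoxeterMatrix B)
    (ρ : M.Group →* Module.End ℝ (B → ℝ))
    (hρ : ∀ (s : B) (v : B → ℝ),
      ρ (M.simple s) v = v - (2 * form M v (sroot s)) • sroot s)
    (lam mu : B → ℝ) (hlam : IsPosRoot M ρ lam)
    (hle : PLE M ρ lam mu) :
    ∀ s : B, lam s ≤ mu s := by
  obtain ⟨w, rfl, hdepth⟩ := hle
  obtain ⟨ω, hω, rfl⟩ := M.toCoxeterSystem.exists_isReduced w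
  exact le_rho_wordProd_of_depth_eq hρ hlam.1 ω (by rw [hdepth, hω.eq])

theorem statement7 [DecidableEq B] [Fintype B] (M : CoxeterMatrix B)
    (ρ : M.Group →* Module.End ℝ (B → ℝ))
    (hρ : ∀ (s : B) (v : B → ℝ),
      ρ (M.simple s) v = v - (2 * form M v (sroot s)) • sroot s)
    (lam mu : B → ℝ) (hlam : IsPosRoot M ρ lam) (hmu : IsPosRoot M ρ mu)
    (hle : PLE M ρ lam mu) :
    ∀ s : B, lam s ≤ mu s :=
  statement7_general M ρ hρ lam mu hlam hle
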